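/- In the stationary process of the DSS, the expected number of topplings at each site per avalanche equals one: for every site x ∈ {1,…,L} and every t ≥ 1, E[s(x,t)] = 1. -/

import Mathlib

namespace DSS

/-- A state of the DSS on `L` sites: a stable field `z : Fin L → Bool` together with a
finite multiset `w` of waiting particles (particles past site `L` have left the system). -/
structure State (L : ℕ) where
  z : Fin L → Bool
  w : Multiset (Fin L)

variable {L : ℕ}

/-- The multiset holding the right neighbour of `x`; empty if the particle leaves the system. -/
def succSite (L : ℕ) (x : Fin L) : Multiset (Fin L) :=
  if h : x.val + 1 < L then {(⟨x.val + 1, h⟩ : Fin L)} else 0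

/-- Evolution of a waiting particle at `x` when `z x = 1`: the waiting particle moves to
`x+1` and the stable particle at `x` becomes a waiting particle at `x`. -/
def topple (s : State L) (x : Fin L) : State L :=
  ⟨Function.update s.z x false, s.w + succSite L x⟩

/-- Evolution of a waiting particle at `x` when `z x = 0`, settling branch (probability p). -/
def settle (s : State L) (x : Fin L) : State L :=
  ⟨Function.update s.z x true, s.w.erase x⟩

/-- Evolution of a waiting particle at `x` when `z x = 0`, jumping branch (probability q). -/
def jump (s : State L) (x : Fin L) : State L :=
  ⟨s.z, s.w.erase x + succSite L x⟩

/-- `stabilizeAux p q R n s c` is the probability that, evolving one waiting particle at a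
time (the particle being selected by the rule `R`), the process started from `s` reaches
within `n` elementary steps a stable state whose stable field is `c`. -/
noncomputable def stabilizeAux (p q : ℝ) (R : State L → Option (Fin L)) :
    ℕ → State L → (Fin L → Bool) → ℝ
  | 0, s, c => if s.w = 0 ∧ s.z = c then 1 else 0
  | n + 1, s, c =>
    match R s with
    | none => if s.z = c then 1 else 0
    | some x =>
      if s.z x then stabilizeAux p q R n (topple s x) c
      else p * stabilizeAux p q R n (settle s x) c
        + q * stabilizeAux p q R n (jump s x) c

/-- The canonical evolution rule: evolve the leftmost waiting particle. -/
def minRule (s : State L) : Option (Fin L) :=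
  if h : s.w = 0 then none
  else some (s.w.toFinset.min'
    (Finset.nonempty_iff_ne_empty.mpr (by simpa [Multiset.toFinset_eq_empty] using h)))

/-- A termination measure: the stabilization process started from `s` ends after at most
`fuel s` elementary steps, whatever the rule and the randomness. -/
def potential (s : State L) : ℕ :=
  (s.w.map fun x => L + 1 - x.val).sum + ∑ x : Fin L, (if s.z x then L + 1 - x.val else 0)

def fuel (s : State L) : ℕ := 2 * potential s + Multiset.card s.w

/-- Add one waiting particle at site `1` (index `0`). -/
def addGrain (r : Fin L → Bool) : State L :=
  ⟨r, if h : 0 < L then {(⟨0, h⟩ : Fin L)} else 0⟩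

/-- The driven-dissipative transition kernel `W` of the DSS: add a particle at site 1 and
stabilize. -/
noncomputable def Wker (p q : ℝ) (r r' : Fin L → Bool) : ℝ :=
  stabilizeAux p q minRule (fuel (addGrain r)) (addGrain r) r'

/-- `W` as a matrix on stable configurations. -/
noncomputable def Wmat (p q : ℝ) (L : ℕ) :
    Matrix (Fin L → Bool) (Fin L → Bool) ℝ :=
  Matrix.of fun r r' => Wker p q r r'

/-- The product Bernoulli(p) measure `ψ(r) = p^(Σ r) q^(L - Σ r)`. -/
noncomputable def psi (p q : ℝ) {L : ℕ} (r : Fin L → Bool) : ℝ :=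
  p ^ (Finset.univ.filter fun x => r x = true).card *
    q ^ (L - (Finset.univ.filter fun x => r x = true).card)



/-- Same as `stabilizeAux`, additionally recording the number of topplings performed at each
site: `stabilizeSAux p q R n s c k` is the probability that the process started from `s`
terminates within `n` steps on the stable field `c` having performed exactly `k x`
topplings (transfers of a waiting particle from `x` to `x+1`) at each site `x`. -/
noncomputable def stabilizeSAux (p q : ℝ) (R : State L → Option (Fin L)) :
    ℕ → State L → (Fin L → Bool) → (Fin L → ℕ) → ℝ
  | 0, s, c, k => if s.w = 0 ∧ s.z = c ∧ k = 0 then 1 else 0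
  | n + 1, s, c, k =>
    match R s with
    | none => if s.z = c ∧ k = 0 then 1 else 0
    | some x =>
      if s.z x then
        (if k x = 0 then 0
          else stabilizeSAux p q R n (topple s x) c (Function.update k x (k x - 1)))
      else
        p * stabilizeSAux p q R n (settle s x) c k
          + q * (if k x = 0 then 0
              else stabilizeSAux p q R n (jump s x) c (Function.update k x (k x - 1)))

/-- Joint avalanche kernel: `Kker p q r r' k` is the probability that, adding one particle
at site 1 to the stable configuration `r`, the resulting avalanche leads to the stable
configuration `r'` with exactly `k x` topplings at each site `x`. -/
noncomputable def Kker (p q : ℝ) (r r' : Fin L → Bool) (k : Fin L → ℕ) : ℝ :=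
  stabilizeSAux p q minRule (fuel (addGrain r)) (addGrain r) r' k

/-- `E[s(x,t)]`: expectation of the number of topplings at site `x` in the `t`-th avalanche
(`t ≥ 1`), for the stationary process started from `ψ`. -/
noncomputable def meanS (p q : ℝ) (L : ℕ) (t : ℕ) (x : Fin L) : ℝ :=
  ∑ r0 : Fin L → Bool, ∑ r1 : Fin L → Bool, ∑ r2 : Fin L → Bool,
    ∑' k : Fin L → ℕ,
      psi p q r0 * ((Wmat p q L) ^ (t - 1)) r0 r1 * Kker p q r1 r2 k * (k x : ℝ)

/-- `E[s(x,t) s(x',t+τ)]` (`t, τ ≥ 1`) for the stationary process started from `ψ`. -/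
noncomputable def corrS (p q : ℝ) (L : ℕ) (t τ : ℕ) (x x' : Fin L) : ℝ :=
  ∑ r0 : Fin L → Bool, ∑ r1 : Fin L → Bool, ∑ r2 : Fin L → Bool,
    ∑ r3 : Fin L → Bool, ∑ r4 : Fin L → Bool,
      ∑' k1 : Fin L → ℕ, ∑' k2 : Fin L → ℕ,
        psi p q r0 * ((Wmat p q L) ^ (t - 1)) r0 r1 *
          Kker p q r1 r2 k1 * (k1 x : ℝ) *
          ((Wmat p q L) ^ (τ - 1)) r2 r3 *
          Kker p q r3 r4 k2 * (k2 x' : ℝ)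

/-!
Particles in the sites `≤ x` are conserved except that each toppling at `x` moves one of them
out, so an avalanche from `r` to `r'` topples `1 + N r - N r'` times at `x`, where `N` counts
the stable particles in the sites `≤ x`. Under a stationary law `N r - N r'` has mean zero, so it
remains to show that `ψ` is stationary. As the leftmost waiting particle always moves first, an
avalanche sweeps the chain from left to right, and we induct downwards on the site `m`: if the
sites `> m` are Bernoulli(p) when `m` receives its first particle, then so are the sites `≥ m`
once `m` is emptied, because the last step at `m` finds it empty and fills it with probability
`p`, and the sites `> m` are Bernoulli(p) again however many particles were passed on to them.
-/

open Function Finset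

theorem sum_apply_update_add {ι α M : Type*} [Fintype ι] [DecidableEq ι] [AddCommMonoid M]
    (g : ι → α → M) (z : ι → α) (i : ι) (a : α) :
    ∑ y, g y (update z i a y) + g i (z i) = ∑ y, g y (z y) + g i a := by
  simp_rw [apply_update (fun y => g y) z i a]
  rw [sum_update_of_mem (mem_univ i), ← sum_erase_add _ _ (mem_univ i),
    sdiff_singleton_eq_erase]
  abel

theorem update_pred_apply_add {ι : Type*} [DecidableEq ι] {k : ι → ℕ} {y : ι} (hk : k y ≠ 0)
    (x : ι) : update k y (k y - 1) x + (if y = x then 1 else 0) = k x := by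
  rcases eq_or_ne y x with rfl | hyx
  · simp only [update_self, if_true]; omega
  · simp [update_of_ne (Ne.symm hyx), hyx]

theorem hasSum_ite_update_pred {ι M : Type*} [DecidableEq ι] [AddCommMonoid M]
    [TopologicalSpace M] {F : (ι → ℕ) → M} {T : M} (hF : HasSum F T) (x : ι) :
    HasSum (fun k => if k x = 0 then 0 else F (update k x (k x - 1))) T := by
  set succAt : (ι → ℕ) → (ι → ℕ) := fun k => update k x (k x + 1)
  have hinj : Injective succAt := fun k k' h => by
    have hx := congrFun h x
    simp only [succAt, update_self, add_left_inj] at hx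
    have h' := congrArg (update · x (k x)) h
    simp only [succAt, update_idem, update_eq_self] at h'
    rwa [hx, update_eq_self] at h'
  refine (hinj.hasSum_iff fun k hk => if_pos ?_).mp ?_
  · by_contra hkx
    exact hk ⟨update k x (k x - 1), by simp [succAt, Nat.sub_add_cancel (Nat.pos_of_ne_zero hkx)]⟩
  · simpa [succAt, Function.comp_def] using hF

theorem sum_mul_sum_mul_one_add_sub_of_stationary {ι R : Type*} [Fintype ι] [CommRing R]
    {v : ι → R} {W : Matrix ι ι R} (hrow : ∀ i, ∑ j, W i j = 1) (hv : Matrix.vecMul v W = v)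
    (hv₁ : ∑ i, v i = 1) (g : ι → R) :
    ∑ i, v i * ∑ j, W i j * (1 + g i - g j) = 1 := by
  have hstep : ∀ i, ∑ j, W i j * (1 + g i - g j) = 1 + g i - ∑ j, W i j * g j := fun i => by
    simp_rw [mul_sub, sum_sub_distrib, ← sum_mul, hrow, one_mul]
  have hflow : ∑ i, v i * ∑ j, W i j * g j = ∑ j, v j * g j := by
    simp_rw [mul_sum, ← mul_assoc]
    rw [sum_comm]
    simp_rw [← sum_mul]
    exact sum_congr rfl fun j _ => congrArg (· * g j) (congrFun hv j)
  simp_rw [hstep, mul_sub, sum_sub_distrib, hflow, mul_add, sum_add_distrib, mul_one, hv₁]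
  ring

section minRule

variable {s : State L} {x : Fin L}

theorem minRule_eq_none_iff : minRule s = none ↔ s.w = 0 := by
  unfold minRule; split_ifs with h <;> simp [h]

theorem mem_of_minRule_eq_some (h : minRule s = some x) : x ∈ s.w := by
  unfold minRule at h
  split_ifs at h with hw
  cases h
  exact Multiset.mem_toFinset.mp (min'_mem _ _)

theorem minRule_eq_some_of_forall_le (hx : x ∈ s.w) (hmin : ∀ y ∈ s.w, x ≤ y) :
    minRule s = some x := by
  have hw : s.w ≠ 0 := fun h => by simp [h] at hx
  simp only [minRule, hw, dite_false, Option.some.injEq]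
  exact le_antisymm (min'_le _ _ (Multiset.mem_toFinset.mpr hx))
    (le_min' _ _ _ fun y hy => hmin y (Multiset.mem_toFinset.mp hy))

end minRule

section fuel

variable {s : State L} {x : Fin L}

theorem sum_map_succSite_add_one_le (x : Fin L) :
    ((succSite L x).map fun y : Fin L => L + 1 - y.val).sum + 1 ≤ L + 1 - x.val := by
  unfold succSite; split_ifs <;> simp <;> omega

theorem card_succSite_le (x : Fin L) : Multiset.card (succSite L x) ≤ 1 := by
  unfold succSite; split_ifs <;> simp

theorem fuel_topple_lt (hz : s.z x = true) : fuel (topple s x) < fuel s := by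
  have hz' := sum_apply_update_add (fun y b => if b then L + 1 - y.val else 0) s.z x false
  have := sum_map_succSite_add_one_le x
  have := card_succSite_le x
  simp only [hz, if_true, Bool.false_eq_true, if_false] at hz'
  dsimp only [fuel, potential, topple]
  simp only [Multiset.map_add, Multiset.sum_add, Multiset.card_add]
  omega

theorem fuel_settle_lt (hx : x ∈ s.w) : fuel (settle s x) < fuel s := by
  have hz := sum_apply_update_add (fun y b => if b then L + 1 - y.val else 0) s.z x true
  have := Multiset.sum_map_erase (f := fun y : Fin L => L + 1 - y.val) hx
  have := Multiset.card_erase_add_one hx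
  simp only [if_true] at hz
  dsimp only [fuel, potential, settle]
  split_ifs at hz <;> omega

theorem fuel_jump_lt (hx : x ∈ s.w) : fuel (jump s x) < fuel s := by
  have := Multiset.sum_map_erase (f := fun y : Fin L => L + 1 - y.val) hx
  have := Multiset.card_erase_add_one hx
  have := sum_map_succSite_add_one_le x
  have := card_succSite_le x
  dsimp only [fuel, potential, jump]
  simp only [Multiset.map_add, Multiset.sum_add, Multiset.card_add]
  omega

end fuel

section stab

variable {p q : ℝ} {s : State L} {x : Fin L}

theorem stabilizeAux_succ_of_eq_some {R : State L → Option (Fin L)} (n : ℕ) (hx : R s = some x)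
    (c : Fin L → Bool) :
    stabilizeAux p q R (n + 1) s c =
      if s.z x then stabilizeAux p q R n (topple s x) c
      else p * stabilizeAux p q R n (settle s x) c + q * stabilizeAux p q R n (jump s x) c := by
  rw [stabilizeAux, hx]

theorem stabilizeAux_of_w_eq_zero (n : ℕ) (hw : s.w = 0) (c : Fin L → Bool) :
    stabilizeAux p q minRule n s c = if s.z = c then 1 else 0 := by
  cases n with
  | zero => simp [stabilizeAux, hw]
  | succ n => rw [stabilizeAux, minRule_eq_none_iff.mpr hw]

theorem one_le_fuel_of_minRule_eq_some (hx : minRule s = some x) : 1 ≤ fuel s := by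
  have := Multiset.card_pos_iff_exists_mem.mpr ⟨x, mem_of_minRule_eq_some hx⟩
  unfold fuel; omega

noncomputable def stab (p q : ℝ) (s : State L) (c : Fin L → Bool) : ℝ :=
  stabilizeAux p q minRule (fuel s) s c

theorem stabilizeAux_eq_stab {n : ℕ} (hn : fuel s ≤ n) (c : Fin L → Bool) :
    stabilizeAux p q minRule n s c = stab p q s c := by
  induction n using Nat.strong_induction_on generalizing s with
  | _ n ih =>
  cases hx : minRule s with
  | none =>
    have hw := minRule_eq_none_iff.mp hx
    rw [stab, stabilizeAux_of_w_eq_zero _ hw, stabilizeAux_of_w_eq_zero _ hw]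
  | some x =>
    have hxw := mem_of_minRule_eq_some hx
    have h1 := one_le_fuel_of_minRule_eq_some hx
    obtain ⟨n', rfl⟩ : ∃ n', n = n' + 1 := ⟨n - 1, by omega⟩
    obtain ⟨f, hf⟩ : ∃ f, fuel s = f + 1 := ⟨fuel s - 1, by omega⟩
    have hchild : ∀ t : State L, fuel t < fuel s →
        stabilizeAux p q minRule n' t c = stabilizeAux p q minRule f t c := fun t ht => by
      rw [ih n' (by omega) (by omega), ih f (by omega) (by omega)]
    rw [stab, hf, stabilizeAux_succ_of_eq_some _ hx,
      stabilizeAux_succ_of_eq_some _ hx]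
    split_ifs with hz
    · exact hchild _ (fuel_topple_lt hz)
    · rw [hchild _ (fuel_settle_lt hxw), hchild _ (fuel_jump_lt hxw)]

theorem stab_of_w_eq_zero (hw : s.w = 0) (c : Fin L → Bool) :
    stab p q s c = if s.z = c then 1 else 0 :=
  stabilizeAux_of_w_eq_zero _ hw c

theorem stab_of_minRule_eq_some (hx : minRule s = some x) (c : Fin L → Bool) :
    stab p q s c =
      if s.z x then stab p q (topple s x) c
      else p * stab p q (settle s x) c + q * stab p q (jump s x) c := by
  have hxw := mem_of_minRule_eq_some hx
  obtain ⟨f, hf⟩ : ∃ f, fuel s = f + 1 :=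
    ⟨fuel s - 1, by have := one_le_fuel_of_minRule_eq_some hx; omega⟩
  rw [stab, hf, stabilizeAux_succ_of_eq_some _ hx]
  split_ifs with hz
  · exact stabilizeAux_eq_stab (by have := fuel_topple_lt hz; omega) c
  · rw [stabilizeAux_eq_stab (by have := fuel_settle_lt hxw; omega),
      stabilizeAux_eq_stab (by have := fuel_jump_lt hxw; omega)]

theorem sum_stab (hpq : p + q = 1) (s : State L) : ∑ c, stab p q s c = 1 := by
  induction h : fuel s using Nat.strong_induction_on generalizing s with
  | _ n ih =>
  cases hx : minRule s with
  | none => simp [stab_of_w_eq_zero (minRule_eq_none_iff.mp hx)]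
  | some x =>
    have hxw := mem_of_minRule_eq_some hx
    simp_rw [stab_of_minRule_eq_some hx]
    split_ifs with hz
    · exact ih _ (h ▸ fuel_topple_lt hz) _ rfl
    · rw [sum_add_distrib, ← mul_sum, ← mul_sum, ih _ (h ▸ fuel_settle_lt hxw) _ rfl,
        ih _ (h ▸ fuel_jump_lt hxw) _ rfl, mul_one, mul_one, hpq]

end stab

section conservation

def stableCount (x : Fin L) (z : Fin L → Bool) : ℕ := ∑ y, if y ≤ x ∧ z y then 1 else 0

def waitingCount (x : Fin L) (w : Multiset (Fin L)) : ℕ := Multiset.card (w.filter (· ≤ x))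

def particleCount (x : Fin L) (s : State L) : ℕ := stableCount x s.z + waitingCount x s.w

variable {s : State L} {x y : Fin L}

theorem stableCount_update_add (z : Fin L → Bool) (b : Bool) :
    stableCount x (update z y b) + (if y ≤ x ∧ z y then 1 else 0) =
      stableCount x z + (if y ≤ x ∧ b then 1 else 0) :=
  sum_apply_update_add (fun y b => if y ≤ x ∧ b = true then 1 else 0) z y b

theorem waitingCount_add (w w' : Multiset (Fin L)) :
    waitingCount x (w + w') = waitingCount x w + waitingCount x w' := by
  simp [waitingCount]

theorem waitingCount_succSite : waitingCount x (succSite L y) = if y < x then 1 else 0 := by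
  unfold waitingCount succSite
  simp only [Fin.lt_def]
  split_ifs with hy hlt hlt
  · rw [Multiset.filter_singleton, if_pos (Fin.le_def.mpr (by exact hlt)),
      Multiset.card_singleton]
  · rw [Multiset.filter_singleton, if_neg (by rw [Fin.le_def]; exact hlt)]
    rfl
  · omega
  · rfl

theorem waitingCount_erase_add {w : Multiset (Fin L)} (hy : y ∈ w) :
    waitingCount x (w.erase y) + (if y ≤ x then 1 else 0) = waitingCount x w := by
  conv_rhs => rw [← Multiset.cons_erase hy]
  unfold waitingCount
  rw [Multiset.filter_cons]
  split_ifs <;> simp [add_comm]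

theorem particleCount_topple (hz : s.z y = true) :
    particleCount x (topple s y) + (if y = x then 1 else 0) = particleCount x s := by
  have hstable := stableCount_update_add (x := x) (y := y) s.z false
  have hwaiting := waitingCount_add (x := x) s.w (succSite L y)
  rw [waitingCount_succSite] at hwaiting
  simp only [particleCount, topple, hz] at *
  rcases lt_trichotomy y x with hyx | rfl | hyx
  · simp [hyx, hyx.le, hyx.ne] at *; omega
  · simp at *; omega
  · simp [hyx.not_ge, hyx.not_gt, hyx.ne'] at *; omega

theorem particleCount_settle (hy : y ∈ s.w) (hz : s.z y = false) :
    particleCount x (settle s y) = particleCount x s := by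
  have hstable := stableCount_update_add (x := x) (y := y) s.z true
  have hwaiting := waitingCount_erase_add (x := x) hy
  simp only [hz, Bool.false_eq_true, and_false, and_true, if_false, add_zero] at hstable
  simp only [particleCount, settle]
  split_ifs at * <;> omega

theorem particleCount_jump (hy : y ∈ s.w) :
    particleCount x (jump s y) + (if y = x then 1 else 0) = particleCount x s := by
  have hwaiting := waitingCount_erase_add (x := x) hy
  have hsucc := waitingCount_add (x := x) (s.w.erase y) (succSite L y)
  rw [waitingCount_succSite] at hsucc
  simp only [particleCount, jump] at *
  rcases lt_trichotomy y x with hyx | rfl | hyx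
  · simp [hyx, hyx.le, hyx.ne] at *; omega
  · simp at *; omega
  · simp [hyx.not_ge, hyx.not_gt, hyx.ne'] at *; omega

end conservation

section toppleCounts

variable {p q : ℝ} {R : State L → Option (Fin L)} {s : State L} {x : Fin L}

theorem stabilizeSAux_succ_of_eq_none (n : ℕ) (h : R s = none) (c : Fin L → Bool)
    (k : Fin L → ℕ) :
    stabilizeSAux p q R (n + 1) s c k = if s.z = c ∧ k = 0 then 1 else 0 := by
  rw [stabilizeSAux, h]

theorem stabilizeSAux_succ_of_eq_some (n : ℕ) (hx : R s = some x) (c : Fin L → Bool)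
    (k : Fin L → ℕ) :
    stabilizeSAux p q R (n + 1) s c k =
      if s.z x then
        (if k x = 0 then 0 else stabilizeSAux p q R n (topple s x) c (update k x (k x - 1)))
      else
        p * stabilizeSAux p q R n (settle s x) c k
          + q * (if k x = 0 then 0
              else stabilizeSAux p q R n (jump s x) c (update k x (k x - 1))) := by
  rw [stabilizeSAux, hx]

theorem add_stableCount_eq_particleCount {n : ℕ} {c : Fin L → Bool} {k : Fin L → ℕ}
    (h : stabilizeSAux p q minRule n s c k ≠ 0) (x : Fin L) :
    k x + stableCount x c = particleCount x s := by
  induction n generalizing s k with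
  | zero =>
    simp only [stabilizeSAux, ne_eq, ite_eq_right_iff, one_ne_zero, imp_false, not_not] at h
    obtain ⟨hw, rfl, rfl⟩ := h
    simp [particleCount, waitingCount, hw]
  | succ n ih =>
    cases hR : minRule s with
    | none =>
      simp only [stabilizeSAux_succ_of_eq_none n hR, ne_eq, ite_eq_right_iff, one_ne_zero,
        imp_false, not_not] at h
      obtain ⟨rfl, rfl⟩ := h
      simp [particleCount, waitingCount, minRule_eq_none_iff.mp hR]
    | some y =>
      have hy := mem_of_minRule_eq_some hR
      rw [stabilizeSAux_succ_of_eq_some n hR] at h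
      split_ifs at h with hz hk hk
      · exact absurd rfl h
      · have := ih h
        have := particleCount_topple (x := x) hz
        have := update_pred_apply_add hk x
        omega
      · by_cases hsettle : stabilizeSAux p q minRule n (settle s y) c k = 0
        · rw [hsettle, mul_zero, zero_add, mul_zero] at h
          exact absurd rfl h
        · rw [ih hsettle, particleCount_settle hy (by simpa using hz)]
      · by_cases hsettle : stabilizeSAux p q minRule n (settle s y) c k = 0
        · rw [hsettle, mul_zero, zero_add] at h
          have := ih (right_ne_zero_of_mul h)
          have := particleCount_jump (x := x) hy
          have := update_pred_apply_add hk x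
          omega
        · rw [ih hsettle, particleCount_settle hy (by simpa using hz)]

theorem hasSum_stabilizeSAux (n : ℕ) (s : State L) (c : Fin L → Bool) :
    HasSum (stabilizeSAux p q R n s c) (stabilizeAux p q R n s c) := by
  induction n generalizing s with
  | zero =>
    convert hasSum_ite_eq (0 : Fin L → ℕ) (if s.w = 0 ∧ s.z = c then (1 : ℝ) else 0) using 1
    ext k
    by_cases hk : k = 0 <;> simp [stabilizeSAux, hk, and_comm]
    rfl
  | succ n ih =>
    cases hR : R s with
    | none =>
      rw [stabilizeAux, hR]
      convert hasSum_ite_eq (0 : Fin L → ℕ) (if s.z = c then (1 : ℝ) else 0) using 1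
      ext k
      by_cases hk : k = 0 <;> simp [stabilizeSAux_succ_of_eq_none n hR, hk]
    | some x =>
      rw [funext (stabilizeSAux_succ_of_eq_some n hR c), stabilizeAux_succ_of_eq_some n hR]
      cases s.z x
      · exact ((ih _).mul_left p).add ((hasSum_ite_update_pred (ih _) x).mul_left q)
      · exact hasSum_ite_update_pred (ih _) x

end toppleCounts

section avalanche

variable {p q : ℝ}

theorem particleCount_addGrain (r : Fin L → Bool) (x : Fin L) :
    particleCount x (addGrain r) = stableCount x r + 1 := by
  have hL : 0 < L := x.pos
  simp only [particleCount, addGrain, dif_pos hL, waitingCount,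
    Multiset.filter_singleton, if_pos (Fin.le_def.mpr (Nat.zero_le x.val) : (⟨0, hL⟩ : Fin L) ≤ x)]
  rfl

theorem hasSum_Kker (r r' : Fin L → Bool) : HasSum (Kker p q r r') (Wker p q r r') :=
  hasSum_stabilizeSAux _ _ _

theorem tsum_Kker_mul_apply (r r' : Fin L → Bool) (x : Fin L) :
    ∑' k, Kker p q r r' k * (k x : ℝ) =
      Wker p q r r' * (1 + stableCount x r - stableCount x r') := by
  have hcount : ∀ k, Kker p q r r' k * (k x : ℝ) =
      Kker p q r r' k * (1 + stableCount x r - stableCount x r') := fun k => by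
    by_cases h : Kker p q r r' k = 0
    · simp [h]
    · have := add_stableCount_eq_particleCount h x
      rw [particleCount_addGrain] at this
      congr 1
      rw [eq_sub_iff_add_eq]
      exact_mod_cast this.trans (add_comm _ _)
  rw [tsum_congr hcount, tsum_mul_right, (hasSum_Kker r r').tsum_eq]

end avalanche

section stationarity

variable {p q : ℝ}

noncomputable def bern (p q : ℝ) (b : Bool) : ℝ := if b then p else q

/-- The law of a configuration frozen at `z` on the sites `< n` and Bernoulli(p) on the
sites `≥ n`. -/
noncomputable def bernFrom (p q : ℝ) (n : ℕ) (z c : Fin L → Bool) : ℝ :=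
  ∏ y, if y.val < n then (if c y = z y then 1 else 0) else bern p q (c y)

theorem sum_bern (hpq : p + q = 1) : ∑ b, bern p q b = 1 := by
  simpa [bern, add_comm] using hpq

theorem psi_eq_bernFrom_zero (z c : Fin L → Bool) : psi p q c = bernFrom p q 0 z c := by
  have hcard := card_filter_add_card_filter_not (s := univ) (fun y : Fin L => c y = true)
  rw [card_univ, Fintype.card_fin] at hcard
  simp only [bernFrom, Nat.not_lt_zero, if_false, bern, prod_ite, prod_const, psi]
  congr 2
  omega

theorem sum_psi (hpq : p + q = 1) : ∑ c : Fin L → Bool, psi p q c = 1 := by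
  simp_rw [psi_eq_bernFrom_zero 0, bernFrom, Nat.not_lt_zero, if_false, ← Fintype.prod_sum,
    sum_bern hpq, prod_const_one]

variable {n : ℕ} {y : Fin L} {z c : Fin L → Bool}

theorem bernFrom_update_of_le (h : n ≤ y.val) (b : Bool) :
    bernFrom p q n (update z y b) = bernFrom p q n z := by
  ext c
  refine prod_congr rfl fun y' _ => ?_
  by_cases hy' : y'.val < n
  · rw [update_of_ne (show y' ≠ y by rintro rfl; omega)]
  · simp only [hy', if_false]

theorem bernFrom_eq_zero (hy : y.val < n) (hc : c y ≠ z y) : bernFrom p q n z c = 0 :=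
  prod_eq_zero (mem_univ y) (by simp [hy, hc])

theorem bernFrom_eq_sum_update (y : Fin L) (z c : Fin L → Bool) :
    bernFrom p q y.val z c = ∑ b, bern p q b * bernFrom p q (y.val + 1) (update z y b) c := by
  have hrest : ∀ b, ∏ y' ∈ univ.erase y,
      (if y'.val < y.val + 1 then (if c y' = update z y b y' then 1 else 0) else bern p q (c y'))
      = ∏ y' ∈ univ.erase y,
        (if y'.val < y.val then (if c y' = z y' then 1 else 0) else bern p q (c y')) := by
    refine fun b => prod_congr rfl fun y' hy' => ?_
    have hne := ne_of_mem_erase hy'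
    have : y'.val ≠ y.val := fun h => hne (Fin.ext h)
    rw [update_of_ne hne]
    congr 1
    simp only [eq_iff_iff]
    omega
  simp only [bernFrom, ← mul_prod_erase univ _ (mem_univ y), hrest, lt_irrefl, if_false,
    Nat.lt_succ_self, if_true, update_self, ← mul_assoc, ← sum_mul, Fintype.sum_bool]
  cases c y <;> simp

theorem sum_bernFrom_mul_congr {G H : (Fin L → Bool) → ℝ} (hy : y.val < n)
    (h : ∀ f, f y = z y → G f = H f) :
    ∑ f, bernFrom p q n z f * G f = ∑ f, bernFrom p q n z f * H f := by
  refine sum_congr rfl fun f _ => ?_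
  by_cases hf : f y = z y
  · rw [h f hf]
  · rw [bernFrom_eq_zero hy hf, zero_mul, zero_mul]

/-- The two sides are matched by the involution flipping `f y` exactly when `z y ≠ b`. -/
theorem sum_bernFrom_mul_update (y : Fin L) (z : Fin L → Bool) (b : Bool)
    (G : (Fin L → Bool) → ℝ) :
    ∑ f, bernFrom p q (y.val + 1) z f * G (update f y b) =
      ∑ f, bernFrom p q (y.val + 1) (update z y b) f * G f := by
  set σ : (Fin L → Bool) → (Fin L → Bool) := fun f => update f y (xor (f y) (xor (z y) b))
  have hσ : Involutive σ := fun f => by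
    ext y'
    rcases eq_or_ne y' y with rfl | hne
    · simp [σ]
    · simp [σ, update_of_ne hne]
  have hweight : ∀ f, bernFrom p q (y.val + 1) z (σ f) =
      bernFrom p q (y.val + 1) (update z y b) f := fun f => by
    refine prod_congr rfl fun y' _ => ?_
    rcases eq_or_ne y' y with rfl | hne
    · simp only [σ, update_self]
      cases f y' <;> cases z y' <;> cases b <;> simp
    · simp [σ, update_of_ne hne]
  calc ∑ f, bernFrom p q (y.val + 1) z f * G (update f y b)
      = ∑ f, bernFrom p q (y.val + 1) z (σ f) * G (update (σ f) y b) :=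
        (Fintype.sum_equiv hσ.toPerm _ _ fun _ => rfl).symm
    _ = ∑ f, bernFrom p q (y.val + 1) (update z y b) f * G (update f y b) := by
        simp only [hweight, σ, update_idem]
    _ = ∑ f, bernFrom p q (y.val + 1) (update z y b) f * G f :=
        sum_bernFrom_mul_congr (Nat.lt_succ_self _) fun f hf => by
          rw [update_eq_self_iff.mpr (by simpa using hf.symm)]

/-- `j` waiting particles at `m` and `e` already passed on to `m + 1`. -/
def waitingAt (m : Fin L) (j e : ℕ) : Multiset (Fin L) :=
  Multiset.replicate j m + e • succSite L m

variable {m : Fin L} {j e : ℕ}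

theorem waitingAt_zero_eq_of_val_eq {m' : Fin L} (hm' : m'.val = m.val + 1) (e : ℕ) :
    waitingAt m 0 e = waitingAt m' e 0 := by
  simp [waitingAt, succSite, Multiset.nsmul_singleton, ← hm']

theorem waitingAt_zero_eq_zero (h : ¬ (m.val + 1 < L ∧ 1 ≤ e)) : waitingAt m 0 e = 0 := by
  rcases not_and_or.mp h with h | h
  · simp [waitingAt, succSite, h]
  · simp [waitingAt, show e = 0 by omega]

theorem addGrain_eq_waitingAt (r : Fin L → Bool) {m₀ : Fin L} (hm₀ : m₀.val = 0) :
    addGrain r = ⟨r, waitingAt m₀ 1 0⟩ := by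
  have hL : 0 < L := hm₀ ▸ m₀.pos
  simp [addGrain, waitingAt, hL, Fin.ext_iff, hm₀]

theorem minRule_waitingAt (hj : 1 ≤ j) (f : Fin L → Bool) :
    minRule ⟨f, waitingAt m j e⟩ = some m := by
  refine minRule_eq_some_of_forall_le
    (Multiset.mem_add.mpr (Or.inl (Multiset.mem_replicate.mpr ⟨by omega, rfl⟩))) ?_
  intro y hy
  rcases Multiset.mem_add.mp hy with hy | hy
  · rw [Multiset.eq_of_mem_replicate hy]
  · unfold succSite at hy
    split_ifs at hy
    · rw [Multiset.nsmul_singleton] at hy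
      rw [Multiset.eq_of_mem_replicate hy, Fin.le_def]
      simp
    · simp at hy

theorem stab_waitingAt_succ (f c : Fin L → Bool) :
    stab p q ⟨f, waitingAt m (j + 1) e⟩ c =
      if f m then stab p q ⟨update f m false, waitingAt m (j + 1) (e + 1)⟩ c
      else p * stab p q ⟨update f m true, waitingAt m j e⟩ c
        + q * stab p q ⟨f, waitingAt m j (e + 1)⟩ c := by
  have herase : (waitingAt m (j + 1) e).erase m = waitingAt m j e := by
    simp [waitingAt, Multiset.replicate_succ]
  have hpass : ∀ j, waitingAt m j e + succSite L m = waitingAt m j (e + 1) := fun j => by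
    simp [waitingAt, add_smul, add_assoc]
  rw [stab_of_minRule_eq_some (minRule_waitingAt (Nat.le_add_left 1 j) f)]
  simp only [topple, settle, jump, herase, hpass]

theorem sum_bernFrom_mul_stab_topple (hz : z m = true) (c : Fin L → Bool) :
    ∑ f, bernFrom p q (m.val + 1) z f * stab p q ⟨f, waitingAt m (j + 1) e⟩ c =
      ∑ f, bernFrom p q (m.val + 1) (update z m false) f *
        stab p q ⟨f, waitingAt m (j + 1) (e + 1)⟩ c := by
  rw [← sum_bernFrom_mul_update]
  exact sum_bernFrom_mul_congr (Nat.lt_succ_self _) fun f hf => by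
    rw [stab_waitingAt_succ, if_pos (hf.trans hz)]

theorem sum_bernFrom_mul_stab_settle_jump (hz : z m = false) (c : Fin L → Bool) :
    ∑ f, bernFrom p q (m.val + 1) z f * stab p q ⟨f, waitingAt m (j + 1) e⟩ c =
      p * ∑ f, bernFrom p q (m.val + 1) (update z m true) f * stab p q ⟨f, waitingAt m j e⟩ c
        + q * ∑ f, bernFrom p q (m.val + 1) z f * stab p q ⟨f, waitingAt m j (e + 1)⟩ c := by
  rw [← sum_bernFrom_mul_update, mul_sum, mul_sum, ← sum_add_distrib]
  trans ∑ f, bernFrom p q (m.val + 1) z f *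
    (p * stab p q ⟨update f m true, waitingAt m j e⟩ c + q * stab p q ⟨f, waitingAt m j (e + 1)⟩ c)
  · exact sum_bernFrom_mul_congr (Nat.lt_succ_self _) fun f hf => by
      rw [stab_waitingAt_succ, if_neg (by simp [hf, hz])]
  · exact sum_congr rfl fun f _ => by ring

theorem sum_bernFrom_mul_stab_waitingAt_zero (hpq : p + q = 1) {c : Fin L → Bool}
    (hnext : ∀ m' : Fin L, m'.val = m.val + 1 → ∀ (i : ℕ) (z : Fin L → Bool),
      ∑ f, bernFrom p q (m'.val + 1) z f * stab p q ⟨f, waitingAt m' (i + 1) 0⟩ c =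
        bernFrom p q m'.val z c)
    (e : ℕ) (z : Fin L → Bool) :
    ∑ f, bernFrom p q (m.val + 1) z f * stab p q ⟨f, waitingAt m 0 e⟩ c =
      bernFrom p q (m.val + 1) z c := by
  by_cases h : m.val + 1 < L ∧ 1 ≤ e
  · obtain ⟨i, rfl⟩ : ∃ i, e = i + 1 := ⟨e - 1, by omega⟩
    obtain ⟨m', hm'⟩ : ∃ m' : Fin L, m'.val = m.val + 1 := ⟨⟨_, h.1⟩, rfl⟩
    rw [waitingAt_zero_eq_of_val_eq hm', ← hm']
    calc ∑ f, bernFrom p q m'.val z f * stab p q ⟨f, waitingAt m' (i + 1) 0⟩ c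
        = ∑ b, bern p q b * ∑ f, bernFrom p q (m'.val + 1) (update z m' b) f *
            stab p q ⟨f, waitingAt m' (i + 1) 0⟩ c := by
          simp_rw [bernFrom_eq_sum_update m' z, sum_mul, mul_sum, mul_assoc]
          exact sum_comm
      _ = bernFrom p q m'.val z c := by
          simp_rw [hnext m' hm', bernFrom_update_of_le le_rfl, ← sum_mul, sum_bern hpq, one_mul]
  · simp [waitingAt_zero_eq_zero h, stab_of_w_eq_zero]

theorem sum_bernFrom_mul_stab_waitingAt (hpq : p + q = 1) (m : Fin L) (i e : ℕ)
    (z c : Fin L → Bool) :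
    ∑ f, bernFrom p q (m.val + 1) z f * stab p q ⟨f, waitingAt m (i + 1) e⟩ c =
      bernFrom p q m.val z c := by
  have hexit := sum_bernFrom_mul_stab_waitingAt_zero hpq (m := m) (c := c)
    fun m' hm' i z => sum_bernFrom_mul_stab_waitingAt hpq m' i 0 z c
  have htopple : ∀ i, (∀ e z, z m = false →
      ∑ f, bernFrom p q (m.val + 1) z f * stab p q ⟨f, waitingAt m (i + 1) e⟩ c =
        bernFrom p q m.val z c) → ∀ e z,
      ∑ f, bernFrom p q (m.val + 1) z f * stab p q ⟨f, waitingAt m (i + 1) e⟩ c =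
        bernFrom p q m.val z c := fun i hfalse e z => by
    cases hz : z m
    · exact hfalse e z hz
    · rw [sum_bernFrom_mul_stab_topple hz, hfalse _ _ (update_self ..),
        bernFrom_update_of_le le_rfl]
  have hsettle : ∀ z, z m = false →
      p * bernFrom p q (m.val + 1) (update z m true) c + q * bernFrom p q (m.val + 1) z c =
        bernFrom p q m.val z c := fun z hz => by
    rw [bernFrom_eq_sum_update m z c, Fintype.sum_bool,
      show update z m false = z from update_eq_self_iff.mpr hz.symm]
    rfl
  induction i generalizing e z with
  | zero =>
    refine htopple 0 (fun e z hz => ?_) e z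
    rw [sum_bernFrom_mul_stab_settle_jump hz, hexit, hexit, hsettle z hz]
  | succ i ih =>
    refine htopple (i + 1) (fun e z hz => ?_) e z
    rw [sum_bernFrom_mul_stab_settle_jump hz, ih, ih, bernFrom_update_of_le le_rfl, ← add_mul,
      hpq, one_mul]
termination_by L - m.val

theorem vecMul_psi_Wmat (hpq : p + q = 1) (hL : 0 < L) :
    Matrix.vecMul (psi p q) (Wmat p q L) = psi p q := by
  ext c
  obtain ⟨m₀, hm₀⟩ : ∃ m₀ : Fin L, m₀.val = 0 := ⟨⟨0, hL⟩, rfl⟩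
  calc Matrix.vecMul (psi p q) (Wmat p q L) c
      = ∑ r, bernFrom p q m₀.val c r * stab p q ⟨r, waitingAt m₀ (0 + 1) 0⟩ c := by
        simp only [Matrix.vecMul, dotProduct, Wmat, Matrix.of_apply, Wker,
          addGrain_eq_waitingAt _ hm₀, psi_eq_bernFrom_zero c, hm₀]
        rfl
    _ = ∑ b, bern p q b * bernFrom p q m₀.val (update c m₀ b) c := by
        simp_rw [bernFrom_eq_sum_update m₀ c, sum_mul, mul_assoc]
        rw [sum_comm]
        simp_rw [← mul_sum, sum_bernFrom_mul_stab_waitingAt hpq]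
    _ = psi p q c := by
        simp_rw [hm₀, ← psi_eq_bernFrom_zero, ← sum_mul, sum_bern hpq, one_mul]

end stationarity

section mean

variable {p q : ℝ}

theorem vecMul_psi_Wmat_pow (hpq : p + q = 1) (hL : 0 < L) (n : ℕ) :
    Matrix.vecMul (psi p q) (Wmat p q L ^ n) = psi p q := by
  induction n with
  | zero => simp
  | succ n ih => rw [pow_succ, ← Matrix.vecMul_vecMul, ih, vecMul_psi_Wmat hpq hL]

theorem sum_Wmat_apply (hpq : p + q = 1) (r : Fin L → Bool) : ∑ c, Wmat p q L r c = 1 :=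
  sum_stab hpq (addGrain r)

end mean

theorem mean_topplings_equals_one_general
    (L : ℕ) (p q : ℝ) (hpq : p + q = 1)
    (x : Fin L) (t : ℕ) :
    meanS p q L t x = 1 := by
  have hL : 0 < L := x.pos
  calc meanS p q L t x
      = ∑ r₁, Matrix.vecMul (psi p q) (Wmat p q L ^ (t - 1)) r₁ *
          ∑ r₂, Wmat p q L r₁ r₂ * (1 + stableCount x r₁ - stableCount x r₂) := by
        simp_rw [meanS, mul_assoc, tsum_mul_left, tsum_Kker_mul_apply, Matrix.vecMul, dotProduct,
          sum_mul, mul_sum, mul_assoc]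
        exact sum_comm
    _ = 1 := by
        rw [vecMul_psi_Wmat_pow hpq hL]
        exact sum_mul_sum_mul_one_add_sub_of_stationary (sum_Wmat_apply hpq)
          (vecMul_psi_Wmat hpq hL) (sum_psi hpq) _

/-- in the stationary process the expected number of topplings at each site
per avalanche equals one: `E[s(x,t)] = 1` for every site `x` and every `t ≥ 1`. -/
theorem mean_topplings_equals_one
    (L : ℕ) (hL : 0 < L) (p q : ℝ) (hp : 0 < p) (hq : 0 < q) (hpq : p + q = 1)
    (x : Fin L) (t : ℕ) (ht : 1 ≤ t) :
    meanS p q L t x = 1 :=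
  mean_topplings_equals_one_general L p q hpq x t

end DSS
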